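/- arXiv:2510.16002 — 3 statements merged into one kernel-verified Lean document; each statement's English description precedes it below -/
import Mathlib

section
/- With u_θ*, v* = σu_φ* as quadratic polynomials (expanded in the zero-mean basis) satisfying the divergence conditions v₂ = −u₁, v₄ = −u₅/2, v₅ = −2u₃, the cubic polynomial η*(θ,φ) = C − (Rf/g)[(−v₀ + v₃Δθ²/12 − u₅Δφ²/24)(θ−θᵢ) + (u₀ − u₃Δθ²/12 − u₄Δφ²/12)(φ−φᵢ) + (u₂/2)(φ−φᵢ)² − (v₁/2)(θ−θᵢ)² + u₁(θ−θᵢ)(φ−φᵢ) − (v₃/3)(θ−θᵢ)³ + (u₄/3)(φ−φᵢ)³ + u₃(θ−θᵢ)²(φ−φᵢ) + (u₅/2)(θ−θᵢ)(φ−φᵢ)²] satisfies g ∂_θ η* = Rf·v* and g ∂_φ η* = −Rf·u_θ* identically. -/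
lemma cubicDeriv (c a1 a2 a3 s x : ℝ) :
    deriv (fun t => c + a1 * (t - s) + a2 * (t - s) ^ 2 + a3 * (t - s) ^ 3) x
      = a1 + 2 * a2 * (x - s) + 3 * a3 * (x - s) ^ 2 := by
  have ht : HasDerivAt (fun t : ℝ => t - s) 1 x := (hasDerivAt_id x).sub_const s
  have h : HasDerivAt (fun t => c + a1 * (t - s) + a2 * (t - s) ^ 2 + a3 * (t - s) ^ 3)
      (0 + a1 * 1 + a2 * ((2 : ℕ) * (x - s) ^ 1 * 1) + a3 * ((3 : ℕ) * (x - s) ^ 2 * 1)) x := by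
    exact (((hasDerivAt_const x c).add (ht.const_mul a1)).add
      ((ht.pow 2).const_mul a2)).add ((ht.pow 3).const_mul a3)
  rw [h.deriv]; push_cast; ring

/-- the cubic reconstructed free surface of the third-order scheme
satisfies the geostrophic balance with the quadratic velocity field. -/
theorem stmt_3 (R f g C u₀ u₁ u₂ u₃ u₄ u₅ v₀ v₁ v₂ v₃ v₄ v₅ Δθ Δφ θi φi : ℝ)
    (hR : 0 < R) (hf : 0 < f) (hg : 0 < g)
    (h2 : v₂ = -u₁) (h4 : v₄ = -(u₅ / 2)) (h5 : v₅ = -(2 * u₃))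
    (uθ : ℝ → ℝ → ℝ) (v : ℝ → ℝ → ℝ) (η : ℝ → ℝ → ℝ)
    (huθ : ∀ θ φ, uθ θ φ = u₀ + u₁ * (θ - θi) + u₂ * (φ - φi)
        + u₃ * ((θ - θi) ^ 2 - Δθ ^ 2 / 12) + u₄ * ((φ - φi) ^ 2 - Δφ ^ 2 / 12)
        + u₅ * (θ - θi) * (φ - φi))
    (hv : ∀ θ φ, v θ φ = v₀ + v₁ * (θ - θi) + v₂ * (φ - φi)
        + v₃ * ((θ - θi) ^ 2 - Δθ ^ 2 / 12) + v₄ * ((φ - φi) ^ 2 - Δφ ^ 2 / 12)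
        + v₅ * (θ - θi) * (φ - φi))
    (hη : ∀ θ φ, η θ φ = C - R * f / g *
        ((-v₀ + v₃ * Δθ ^ 2 / 12 - u₅ * Δφ ^ 2 / 24) * (θ - θi)
          + (u₀ - u₃ * Δθ ^ 2 / 12 - u₄ * Δφ ^ 2 / 12) * (φ - φi)
          + u₂ / 2 * (φ - φi) ^ 2 - v₁ / 2 * (θ - θi) ^ 2
          + u₁ * (θ - θi) * (φ - φi) - v₃ / 3 * (θ - θi) ^ 3
          + u₄ / 3 * (φ - φi) ^ 3 + u₃ * (θ - θi) ^ 2 * (φ - φi)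
          + u₅ / 2 * (θ - θi) * (φ - φi) ^ 2)) :
    ∀ θ φ : ℝ,
      g * deriv (fun θ' => η θ' φ) θ = R * f * v θ φ
      ∧ g * deriv (fun φ' => η θ φ') φ = -(R * f * uθ θ φ) := by
  intro θ φ
  have hg' : g ≠ 0 := ne_of_gt hg
  constructor
  · have e1 : (fun θ' => η θ' φ)
        = fun t => (C - R * f / g * ((u₀ - u₃ * Δθ ^ 2 / 12 - u₄ * Δφ ^ 2 / 12) * (φ - φi)
            + u₂ / 2 * (φ - φi) ^ 2 + u₄ / 3 * (φ - φi) ^ 3))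
          + (-(R * f / g) * ((-v₀ + v₃ * Δθ ^ 2 / 12 - u₅ * Δφ ^ 2 / 24)
              + u₁ * (φ - φi) + u₅ / 2 * (φ - φi) ^ 2)) * (t - θi)
          + (-(R * f / g) * (-v₁ / 2 + u₃ * (φ - φi))) * (t - θi) ^ 2
          + (-(R * f / g) * (-v₃ / 3)) * (t - θi) ^ 3 := by
      funext t; rw [hη]; ring
    rw [e1, cubicDeriv, hv, h2, h4, h5]
    field_simp
    ring
  · have e2 : (fun φ' => η θ φ')
        = fun q => (C - R * f / g * ((-v₀ + v₃ * Δθ ^ 2 / 12 - u₅ * Δφ ^ 2 / 24) * (θ - θi)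
            - v₁ / 2 * (θ - θi) ^ 2 - v₃ / 3 * (θ - θi) ^ 3))
          + (-(R * f / g) * ((u₀ - u₃ * Δθ ^ 2 / 12 - u₄ * Δφ ^ 2 / 12)
              + u₁ * (θ - θi) + u₃ * (θ - θi) ^ 2)) * (q - φi)
          + (-(R * f / g) * (u₂ / 2 + u₅ / 2 * (θ - θi))) * (q - φi) ^ 2
          + (-(R * f / g) * (u₄ / 3)) * (q - φi) ^ 3 := by
      funext q; rw [hη]; ring
    rw [e2, cubicDeriv, huθ]
    field_simp
    ring
end

section
/- The 2×2 linear system arising from the second-order least-squares fit of the velocity coefficients has the explicit solution: u₀ = u_{θ,0}, u₁ = [Δθ(u_{θ,3} − u_{θ,2}) + Δφ(σ₄u_{φ,4} − σ₁u_{φ,1})]/(2(Δθ² + Δφ²)), u₂ = (u_{θ,1} − u_{θ,4})/(2Δφ), v₀ = σ₀u_{φ,0}, v₁ = (σ₃u_{φ,3} − σ₂u_{φ,2})/(2Δθ), v₂ = −u₁. That is, these coefficients minimize the sum of squared residuals of the six interpolation conditions u_θ*(xⱼ) = u_{θ,j} (j = 2,3), u_θ*(yⱼ) = u_{θ,j}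 (j = 1,4), plus v*(xⱼ) = σⱼu_{φ,j} (j = 2,3) and v*(yⱼ) = σⱼu_{φ,j} (j = 1,4), where v₂ = −u₁ is enforced, x₂ = (θᵢ−Δθ, φᵢ), x₃ = (θᵢ+Δθ, φᵢ), y₁ = (θᵢ, φᵢ+Δφ), y₄ = (θᵢ, φᵢ−Δφ), and u₀, v₀ are fixed by the central cell. -/
/-- the explicit formulas (4.11) give the unique least-squares
minimizer of the coupled second-order velocity fit on the cross stencil,
with u₀, v₀ fixed by the central cell and the constraint v₂ = −u₁ enforced. -/
theorem stmt_5 (Δθ Δφ : ℝ) (hΔθ : 0 < Δθ) (hΔφ : 0 < Δφ)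
    (uθ0 uθ1 uθ2 uθ3 uθ4 uφ0 uφ1 uφ2 uφ3 uφ4 σ0 σ1 σ2 σ3 σ4 : ℝ)
    (J : ℝ → ℝ → ℝ → ℝ)
    (hJ : ∀ a b c, J a b c =
        (uθ0 - a * Δθ - uθ2) ^ 2 + (uθ0 + a * Δθ - uθ3) ^ 2
        + (uθ0 + b * Δφ - uθ1) ^ 2 + (uθ0 - b * Δφ - uθ4) ^ 2
        + (σ0 * uφ0 - c * Δθ - σ2 * uφ2) ^ 2 + (σ0 * uφ0 + c * Δθ - σ3 * uφ3) ^ 2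
        + (σ0 * uφ0 + (-a) * Δφ - σ1 * uφ1) ^ 2
        + (σ0 * uφ0 - (-a) * Δφ - σ4 * uφ4) ^ 2)
    (u₁ u₂ v₁ : ℝ)
    (hu₁ : u₁ = (Δθ * (uθ3 - uθ2) + Δφ * (σ4 * uφ4 - σ1 * uφ1)) / (2 * (Δθ ^ 2 + Δφ ^ 2)))
    (hu₂ : u₂ = (uθ1 - uθ4) / (2 * Δφ))
    (hv₁ : v₁ = (σ3 * uφ3 - σ2 * uφ2) / (2 * Δθ)) :
    ∀ a b c : ℝ, J u₁ u₂ v₁ ≤ J a b c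
      ∧ (J a b c = J u₁ u₂ v₁ → a = u₁ ∧ b = u₂ ∧ c = v₁) := by
  intro a b c
  have hs : (0:ℝ) < Δθ ^ 2 + Δφ ^ 2 := by positivity
  have key : J a b c - J u₁ u₂ v₁ =
      2 * (Δθ ^ 2 + Δφ ^ 2) * (a - u₁) ^ 2 + 2 * Δφ ^ 2 * (b - u₂) ^ 2
        + 2 * Δθ ^ 2 * (c - v₁) ^ 2 := by
    rw [hJ, hJ, hu₁, hu₂, hv₁]
    field_simp
    ring
  constructor
  · nlinarith [sq_nonneg (a - u₁), sq_nonneg (b - u₂), sq_nonneg (c - v₁), hs,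
      mul_pos hΔθ hΔθ, mul_pos hΔφ hΔφ]
  · intro h
    have h0 : 2 * (Δθ ^ 2 + Δφ ^ 2) * (a - u₁) ^ 2 + 2 * Δφ ^ 2 * (b - u₂) ^ 2
        + 2 * Δθ ^ 2 * (c - v₁) ^ 2 = 0 := by linarith [key, h.le, h.ge]
    have n1 : (0:ℝ) ≤ 2 * (Δθ ^ 2 + Δφ ^ 2) * (a - u₁) ^ 2 := by positivity
    have n2 : (0:ℝ) ≤ 2 * Δφ ^ 2 * (b - u₂) ^ 2 := by positivity
    have n3 : (0:ℝ) ≤ 2 * Δθ ^ 2 * (c - v₁) ^ 2 := by positivity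
    have z1 : 2 * (Δθ ^ 2 + Δφ ^ 2) * (a - u₁) ^ 2 = 0 := by linarith
    have z2 : 2 * Δφ ^ 2 * (b - u₂) ^ 2 = 0 := by linarith
    have z3 : 2 * Δθ ^ 2 * (c - v₁) ^ 2 = 0 := by linarith
    have c1 : 2 * (Δθ ^ 2 + Δφ ^ 2) ≠ 0 := by positivity
    have c2 : 2 * Δφ ^ 2 ≠ 0 := by positivity
    have c3 : 2 * Δθ ^ 2 ≠ 0 := by positivity
    have e1 := sub_eq_zero.mp (pow_eq_zero_iff two_ne_zero |>.mp
      ((mul_eq_zero.mp z1).resolve_left c1))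
    have e2 := sub_eq_zero.mp (pow_eq_zero_iff two_ne_zero |>.mp
      ((mul_eq_zero.mp z2).resolve_left c2))
    have e3 := sub_eq_zero.mp (pow_eq_zero_iff two_ne_zero |>.mp
      ((mul_eq_zero.mp z3).resolve_left c3))
    exact ⟨e1, e2, e3⟩
end

section
/- Under the hypotheses of Theorem 4.2 (flat bottom, spatially constant pressure, initial data equal to the local approximated geostrophic equilibrium (4.15) with perturbation parameter ε), the exact flux divergence evaluated on the initial data is O(ε²): specifically, ∂_θ(Q_θ*/σ) + ∂_φ(Q_φ*) = O(ε²) where Q_θ* = h_σ*u_θ*, Q_φ* = h_σ*u_φ*, h_σ* = h*σ. -/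
/-! The initial height is in geostrophic balance with the velocity: its gradient is `R f / g`
times the velocity `(u_θ*, σ u_φ*)` rotated by a right angle, so the advection term
`u · ∇h*` vanishes, while the affine velocity field is exactly divergence free. Hence
`∂_θ(h* u_θ*) + ∂_φ(h* σ u_φ*) = u · ∇h* + h* div u` is identically zero on the cell
wherever `σ ≠ 0`, and `K = 0` works. -/

open Real

theorem deriv_mul_add_deriv_mul_eq_zero_of_geostrophic {h u v : ℝ → ℝ → ℝ} {θ φ k dθu dφv : ℝ}
    (hθ : HasDerivAt (h · φ) (k * v θ φ) θ) (hφ : HasDerivAt (h θ ·) (-(k * u θ φ)) φ)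
    (hu : HasDerivAt (u · φ) dθu θ) (hv : HasDerivAt (v θ ·) dφv φ) (hdiv : dθu + dφv = 0) :
    deriv (fun θ' => h θ' φ * u θ' φ) θ + deriv (fun φ' => h θ φ' * v θ φ') φ = 0 := by
  rw [(hθ.fun_mul hu).deriv, (hφ.fun_mul hv).deriv]
  linear_combination h θ φ * hdiv

theorem hasDerivAt_add_mul_sub_add_mul_sub_sq (a b c t₀ t : ℝ) :
    HasDerivAt (fun s => a + b * (s - t₀) + c * (s - t₀) ^ 2) (b + 2 * c * (t - t₀)) t := by
  have hs : HasDerivAt (· - t₀) 1 t := (hasDerivAt_id t).sub_const t₀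
  refine (((hs.const_mul b).const_add a).fun_add ((hs.fun_pow 2).const_mul c)).congr_deriv ?_
  push_cast
  ring

noncomputable section Cell

variable (c hi u₀ u₁ u₂ v₀ v₁ θi φi ε : ℝ)

def cellHeight (θ φ : ℝ) : ℝ :=
  hi + ε * c * (v₀ * (θ - θi) + v₁ / 2 * (θ - θi) ^ 2 - u₀ * (φ - φi)
    - u₂ / 2 * (φ - φi) ^ 2 - u₁ * (θ - θi) * (φ - φi))

def cellZonalVelocity (θ φ : ℝ) : ℝ := ε * (u₀ + u₁ * (θ - θi) + u₂ * (φ - φi))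

/-- `σ u_φ*`, the meridional velocity multiplied by `σ = cos φ`. -/
def cellMeridionalFlux (θ φ : ℝ) : ℝ := ε * (v₀ + v₁ * (θ - θi) - u₁ * (φ - φi))

variable {c hi u₀ u₁ u₂ v₀ v₁ θi φi ε}

theorem hasDerivAt_cellHeight_left (θ φ : ℝ) :
    HasDerivAt (cellHeight c hi u₀ u₁ u₂ v₀ v₁ θi φi ε · φ)
      (c * cellMeridionalFlux u₁ v₀ v₁ θi φi ε θ φ) θ := by
  convert hasDerivAt_add_mul_sub_add_mul_sub_sq
    (hi - ε * c * (u₀ * (φ - φi) + u₂ / 2 * (φ - φi) ^ 2))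
    (ε * c * (v₀ - u₁ * (φ - φi))) (ε * c * (v₁ / 2)) θi θ using 1
  · funext θ'
    simp only [cellHeight]
    ring
  · simp only [cellMeridionalFlux]
    ring

theorem hasDerivAt_cellHeight_right (θ φ : ℝ) :
    HasDerivAt (cellHeight c hi u₀ u₁ u₂ v₀ v₁ θi φi ε θ ·)
      (-(c * cellZonalVelocity u₀ u₁ u₂ θi φi ε θ φ)) φ := by
  convert hasDerivAt_add_mul_sub_add_mul_sub_sq
    (hi + ε * c * (v₀ * (θ - θi) + v₁ / 2 * (θ - θi) ^ 2))
    (-(ε * c * (u₀ + u₁ * (θ - θi)))) (-(ε * c * (u₂ / 2))) φi φ using 1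
  · funext φ'
    simp only [cellHeight]
    ring
  · simp only [cellZonalVelocity]
    ring

theorem hasDerivAt_cellZonalVelocity_left (θ φ : ℝ) :
    HasDerivAt (cellZonalVelocity u₀ u₁ u₂ θi φi ε · φ) (ε * u₁) θ := by
  convert hasDerivAt_add_mul_sub_add_mul_sub_sq
    (ε * (u₀ + u₂ * (φ - φi))) (ε * u₁) 0 θi θ using 1
  · funext θ'
    simp only [cellZonalVelocity]
    ring
  · ring

theorem hasDerivAt_cellMeridionalFlux_right (θ φ : ℝ) :
    HasDerivAt (cellMeridionalFlux u₁ v₀ v₁ θi φi ε θ ·) (-(ε * u₁)) φ := by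
  convert hasDerivAt_add_mul_sub_add_mul_sub_sq
    (ε * (v₀ + v₁ * (θ - θi))) (-(ε * u₁)) 0 φi φ using 1
  · funext φ'
    simp only [cellMeridionalFlux]
    ring
  · ring

end Cell

theorem stmt_17_general (R f g hi u₀ u₁ u₂ v₀ v₁ θi φi Δθ Δφ σmin : ℝ)
    (hσmin : 0 < σmin)
    (hσ : ∀ φ ∈ Set.Icc (φi - Δφ / 2) (φi + Δφ / 2), σmin ≤ Real.cos φ)
    (uθ v : ℝ → ℝ → ℝ → ℝ) (hstar : ℝ → ℝ → ℝ → ℝ)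
    (huθ : ∀ ε θ φ, uθ ε θ φ = ε * (u₀ + u₁ * (θ - θi) + u₂ * (φ - φi)))
    (hv : ∀ ε θ φ, v ε θ φ = ε * (v₀ + v₁ * (θ - θi) - u₁ * (φ - φi)))
    (hh : ∀ ε θ φ, hstar ε θ φ = hi + ε * (R * f / g) *
        (v₀ * (θ - θi) + v₁ / 2 * (θ - θi) ^ 2 - u₀ * (φ - φi)
          - u₂ / 2 * (φ - φi) ^ 2 - u₁ * (θ - θi) * (φ - φi))) :
    ∃ K : ℝ, ∀ ε : ℝ, ∀ θ ∈ Set.Icc (θi - Δθ / 2) (θi + Δθ / 2),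
      ∀ φ ∈ Set.Icc (φi - Δφ / 2) (φi + Δφ / 2),
        |deriv (fun θ' => hstar ε θ' φ * Real.cos φ * uθ ε θ' φ / Real.cos φ) θ
          + deriv (fun φ' => hstar ε θ φ' * v ε θ φ') φ| ≤ K * ε ^ 2 := by
  obtain rfl : hstar = cellHeight (R * f / g) hi u₀ u₁ u₂ v₀ v₁ θi φi := funext₃ hh
  obtain rfl : uθ = cellZonalVelocity u₀ u₁ u₂ θi φi := funext₃ huθ
  obtain rfl : v = cellMeridionalFlux u₁ v₀ v₁ θi φi := funext₃ hv
  refine ⟨0, fun ε θ _ φ hφ => ?_⟩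
  have hcos : cos φ ≠ 0 := (hσmin.trans_le (hσ φ hφ)).ne'
  simp only [mul_right_comm _ (cos φ), mul_div_cancel_right₀ _ hcos]
  rw [deriv_mul_add_deriv_mul_eq_zero_of_geostrophic (hasDerivAt_cellHeight_left θ φ)
    (hasDerivAt_cellHeight_right θ φ) (hasDerivAt_cellZonalVelocity_left θ φ)
    (hasDerivAt_cellMeridionalFlux_right θ φ) (add_neg_cancel _)]
  simp

/-- on the initial data (4.15) of Theorem 4.2 the exact flux
divergence ∂_θ(Q_θ*/σ) + ∂_φ Q_φ* is O(ε²), uniformly on the cell, with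
Q_θ* = h* σ u_θ*, Q_φ* = h* (σ u_φ*) and σ = cos φ bounded away from zero. -/
theorem stmt_17 (R f g hi u₀ u₁ u₂ v₀ v₁ θi φi Δθ Δφ σmin : ℝ)
    (hg : g ≠ 0) (hσmin : 0 < σmin)
    (hσ : ∀ φ ∈ Set.Icc (φi - Δφ / 2) (φi + Δφ / 2), σmin ≤ Real.cos φ)
    (uθ v : ℝ → ℝ → ℝ → ℝ) (hstar : ℝ → ℝ → ℝ → ℝ)
    (huθ : ∀ ε θ φ, uθ ε θ φ = ε * (u₀ + u₁ * (θ - θi) + u₂ * (φ - φi)))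
    (hv : ∀ ε θ φ, v ε θ φ = ε * (v₀ + v₁ * (θ - θi) - u₁ * (φ - φi)))
    (hh : ∀ ε θ φ, hstar ε θ φ = hi + ε * (R * f / g) *
        (v₀ * (θ - θi) + v₁ / 2 * (θ - θi) ^ 2 - u₀ * (φ - φi)
          - u₂ / 2 * (φ - φi) ^ 2 - u₁ * (θ - θi) * (φ - φi))) :
    ∃ K : ℝ, ∀ ε : ℝ, ∀ θ ∈ Set.Icc (θi - Δθ / 2) (θi + Δθ / 2),
      ∀ φ ∈ Set.Icc (φi - Δφ / 2) (φi + Δφ / 2),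
        |deriv (fun θ' => hstar ε θ' φ * Real.cos φ * uθ ε θ' φ / Real.cos φ) θ
          + deriv (fun φ' => hstar ε θ φ' * v ε θ φ') φ| ≤ K * ε ^ 2 :=
  stmt_17_general R f g hi u₀ u₁ u₂ v₀ v₁ θi φi Δθ Δφ σmin hσmin hσ uθ v hstar huθ hv hh
end
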